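/- Let G be a P5-free graph in which no longest cycle is dominating, and let C be a longest cycle of G (with a fixed orientation) chosen to minimize first the maximum component order μ(C) of G − C and then the number ω(C) of components achieving it; let H be a component of G − C with |H| = μ(C) ≥ 2. Then no vertex v of C with a neighbor in H satisfies that v⁺² also has a neighbor in H; that is, N_G(H; C) ∩ N_G(H; C)⁻² = ∅. -/

import Mathlib

open SimpleGraph

variable {V : Type*} [Fintype V] [DecidableEq V]

/-- `p 0, p 1, ..., p (n-1)` is a path of order `n` in `G`. -/
def IsPathOn (G : SimpleGraph V) (n : ℕ) (p : ℕ → V) : Prop :=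
  (∀ i j, i < n → j < n → p i = p j → i = j) ∧
  (∀ i, i + 1 < n → G.Adj (p i) (p (i + 1)))

/-- An induced path of order `n` in `G`. -/
def IsInducedPathOn (G : SimpleGraph V) (n : ℕ) (p : ℕ → V) : Prop :=
  IsPathOn G n p ∧ ∀ i j, i < n → j < n → G.Adj (p i) (p j) → (i + 1 = j ∨ j + 1 = i)

/-- `G` contains no induced path on 5 vertices. -/
def P5Free (G : SimpleGraph V) : Prop := ¬ ∃ p : ℕ → V, IsInducedPathOn G 5 p

/-- `G` contains no induced `K₄` minus an edge. -/
def K4mFree (G : SimpleGraph V) : Prop :=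
  ¬ ∃ a b c d : V, a ≠ b ∧ a ≠ c ∧ a ≠ d ∧ b ≠ c ∧ b ≠ d ∧ c ≠ d ∧
    G.Adj a b ∧ G.Adj a c ∧ G.Adj a d ∧ G.Adj b c ∧ G.Adj b d ∧ ¬ G.Adj c d

/-- `G` contains no induced `W*` (two triangles `abc`, `def` joined by the edge `cd`). -/
def WStarFree (G : SimpleGraph V) : Prop :=
  ¬ ∃ a b c d e f : V, List.Nodup [a, b, c, d, e, f] ∧
    G.Adj a b ∧ G.Adj b c ∧ G.Adj a c ∧ G.Adj d e ∧ G.Adj e f ∧ G.Adj d f ∧ G.Adj c d ∧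
    ¬ G.Adj a d ∧ ¬ G.Adj a e ∧ ¬ G.Adj a f ∧
    ¬ G.Adj b d ∧ ¬ G.Adj b e ∧ ¬ G.Adj b f ∧ ¬ G.Adj c e ∧ ¬ G.Adj c f

/-- `G` contains no induced paw (triangle `abc` with pendant edge `cd`). -/
def Z1Free (G : SimpleGraph V) : Prop :=
  ¬ ∃ a b c d : V, List.Nodup [a, b, c, d] ∧
    G.Adj a b ∧ G.Adj b c ∧ G.Adj a c ∧ G.Adj c d ∧ ¬ G.Adj a d ∧ ¬ G.Adj b d

/-- An (oriented) cycle of length `n` in `G`, as an injective map `ZMod n → V`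
with consecutive vertices adjacent. -/
def IsCycleOn (G : SimpleGraph V) (n : ℕ) (c : ZMod n → V) : Prop :=
  3 ≤ n ∧ Function.Injective c ∧ ∀ i, G.Adj (c i) (c (i + 1))

/-- A longest cycle of `G`. -/
def IsLongestCycle (G : SimpleGraph V) (n : ℕ) (c : ZMod n → V) : Prop :=
  IsCycleOn G n c ∧ ∀ (m : ℕ) (d : ZMod m → V), IsCycleOn G m d → m ≤ n

/-- A dominating cycle: every edge of `G` is incident with a vertex of the cycle. -/
def DominatingCycle (G : SimpleGraph V) (n : ℕ) (c : ZMod n → V) : Prop :=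
  IsCycleOn G n c ∧ ∀ u v : V, G.Adj u v → u ∈ Set.range c ∨ v ∈ Set.range c

/-- `H` is (the vertex set of) a connected component of `G - R`. -/
def IsCompOff (G : SimpleGraph V) (R : Set V) (H : Set V) : Prop :=
  H.Nonempty ∧ Disjoint H R ∧ (G.induce H).Connected ∧
  ∀ u v : V, u ∈ H → v ∉ H → v ∉ R → ¬ G.Adj u v

/-- `μ`: the maximum order of a component of `G - R`. -/
noncomputable def muC (G : SimpleGraph V) (R : Set V) : ℕ :=
  sSup {k | ∃ H : Set V, IsCompOff G R H ∧ H.ncard = k}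

/-- `ω`: the number of components of `G - R` of maximum order. -/
noncomputable def omegaC (G : SimpleGraph V) (R : Set V) : ℕ :=
  {H : Set V | IsCompOff G R H ∧ H.ncard = muC G R}.ncard

/-- `G` is 2-connected: at least 3 vertices, connected, and removing any
vertex leaves it connected. -/
def TwoConnected (G : SimpleGraph V) : Prop :=
  3 ≤ Fintype.card V ∧ G.Connected ∧
  ∀ v : V, (G.induce ({v}ᶜ : Set V)).Connected

/-- The set of indices of `ZMod n` encountered going from `s` to `t` in the
positive direction (including both `s` and `t`). -/
def seg (n : ℕ) (s t : ZMod n) : Set (ZMod n) :=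
  {x | ∃ k : ℕ, x = s + (k : ZMod n) ∧ ∀ m : ℕ, m < k → s + (m : ZMod n) ≠ t}

/-- `G` is complete multipartite: the vertices partition into classes of an
equivalence relation which are independent, with all edges between classes. -/
def CompleteMultipartite (G : SimpleGraph V) : Prop :=
  ∃ r : V → V → Prop, Equivalence r ∧ ∀ u v : V, u ≠ v → (G.Adj u v ↔ ¬ r u v)

/-- A `C`-path (for `R = V(C)`): a path of order at least 2 whose ends lie in
`R` and whose internal vertices avoid `R`. -/
def IsCPath (G : SimpleGraph V) (R : Set V) (m : ℕ) (p : ℕ → V) : Prop :=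
  2 ≤ m ∧ IsPathOn G m p ∧ p 0 ∈ R ∧ p (m - 1) ∈ R ∧
  ∀ i, 0 < i → i < m - 1 → p i ∉ R

/-!
Let `x ∈ H` be adjacent to `c i` and `y ∈ H` to `c (i + 2)`. If `x ≠ y`, an `x`–`y` path
through `H` could replace `c (i + 1)` and give a longer cycle, so `x = y`. In the same way no
vertex of `H` is adjacent to `c (i + 1)`, and no vertex off the cycle is adjacent to both `c i`
and `c (i + 1)`. Hence if `c (i + 1)` had a neighbour `z` off the cycle, then `x' x (c i)
(c (i + 1)) z`, for a neighbour `x'` of `x` in `H`, would be an induced `P₅`. So all neighbours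
of `c (i + 1)` lie on the cycle, and exchanging `c (i + 1)` for `x` gives a longest cycle whose
complement consists of the singleton `{c (i + 1)}`, components inside `H \ {x}` and the
components of `G - C` other than `H`: `μ` does not grow and `ω` drops, against the choice of `C`.
-/

theorem ZMod.natCast_sub_self {n k : ℕ} (hk : k ≤ n) : ((n - k : ℕ) : ZMod n) = -k := by
  rw [Nat.cast_sub hk, ZMod.natCast_self, zero_sub]

theorem List.head?_eq_getLast?_of_length_le_one {α : Type*} {l : List α} (hl : l.length ≤ 1) :
    l.head? = l.getLast? := by
  match l, hl with
  | [], _ => rfl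
  | [_], _ => rfl

section Components

variable {W : Type*} {G : SimpleGraph W} {R R' H K A B : Set W}

namespace IsCompOff

theorem subset_of_adj_closed (hK : IsCompOff G R K) {P : Set W} {u : W} (hu : u ∈ K)
    (huP : u ∈ P) (hstep : ∀ a ∈ K, ∀ b ∈ K, a ∈ P → G.Adj a b → b ∈ P) : K ⊆ P := by
  intro w hw
  obtain ⟨p⟩ := hK.2.2.1.preconnected ⟨u, hu⟩ ⟨w, hw⟩
  suffices ∀ (a b : K), (G.induce K).Walk a b → a.1 ∈ P → b.1 ∈ P from this _ _ p huP
  intro a b q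
  induction q with
  | nil => exact id
  | cons hadj _ ih => exact fun ha => ih (hstep _ (Subtype.mem _) _ (Subtype.mem _) ha hadj)

theorem notMem_of_mem (hK : IsCompOff G R K) {v : W} (hv : v ∈ K) : v ∉ R :=
  Set.disjoint_left.mp hK.2.1 hv

theorem subset_of_mem (hK : IsCompOff G R' K) (hA : IsCompOff G R A) (hKR : Disjoint K R)
    {u : W} (huK : u ∈ K) (huA : u ∈ A) : K ⊆ A :=
  hK.subset_of_adj_closed huK huA fun a _ b hb ha hab => by
    by_contra hbA
    exact hA.2.2.2 a b ha hbA (Set.disjoint_left.mp hKR hb) hab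

theorem eq_of_mem (hA : IsCompOff G R A) (hB : IsCompOff G R B) {u : W} (huA : u ∈ A)
    (huB : u ∈ B) : A = B :=
  (hA.subset_of_mem hB hA.2.1 huA huB).antisymm (hB.subset_of_mem hA hB.2.1 huB huA)

theorem ncard_le_muC [Finite W] (hA : IsCompOff G R A) : A.ncard ≤ muC G R :=
  le_csSup ⟨Nat.card W, by rintro _ ⟨B, -, rfl⟩; exact Set.ncard_le_card B⟩ ⟨A, hA, rfl⟩

theorem exists_adj_of_one_lt_ncard (hH : IsCompOff G R H) {x : W} (hx : x ∈ H)
    (hH1 : 1 < H.ncard) : ∃ y ∈ H, G.Adj x y := by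
  obtain ⟨y, hy, hyx⟩ := Set.exists_ne_of_one_lt_ncard hH1 x
  have : Nontrivial H := ⟨⟨y, hy⟩, ⟨x, hx⟩, fun h => hyx (congrArg Subtype.val h)⟩
  obtain ⟨y, hy⟩ := hH.2.2.1.preconnected.exists_adj_of_nontrivial ⟨x, hx⟩
  exact ⟨y, y.2, hy⟩

end IsCompOff

theorem exists_isCompOff_mem [Finite W] {u : W} (hu : u ∉ R) : ∃ A, IsCompOff G R A ∧ u ∈ A := by
  obtain ⟨A, -, ⟨huA, hAR, hconn⟩, hmax⟩ := (Set.toFinite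
    {A : Set W | u ∈ A ∧ Disjoint A R ∧ (G.induce A).Connected}).exists_le_maximal
    (a := {u}) ⟨rfl, Set.disjoint_singleton_left.mpr hu, by
      rw [SimpleGraph.induce_singleton_eq_top]; exact connected_top⟩
  refine ⟨A, ⟨⟨u, huA⟩, hAR, hconn, fun a b ha hb hbR hab => hb ?_⟩, huA⟩
  have hbig : u ∈ A ∪ {b} ∧ Disjoint (A ∪ {b}) R ∧ (G.induce (A ∪ {b})).Connected :=
    ⟨Or.inl huA, Set.disjoint_union_left.mpr ⟨hAR, Set.disjoint_singleton_left.mpr hbR⟩,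
      connected_induce_union hconn.preconnected (by simp) ha rfl hab⟩
  exact hmax hbig Set.subset_union_left (Or.inr rfl)

theorem IsCompOff.exists_path_list (hH : IsCompOff G R H) {x z : W} (hx : x ∈ H) (hz : z ∈ H) :
    ∃ l : List W, l.Nodup ∧ l.IsChain G.Adj ∧ l.head? = some x ∧ l.getLast? = some z ∧
      ∀ v ∈ l, v ∈ H := by
  classical
  obtain ⟨p⟩ := hH.2.2.1.preconnected ⟨x, hx⟩ ⟨z, hz⟩
  let P := p.toPath
  refine ⟨P.1.support.map Subtype.val, P.2.support_nodup.map Subtype.val_injective,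
    List.isChain_map _ |>.mpr (P.1.isChain_adj_support.imp fun _ _ h => h), ?_, ?_, ?_⟩
  · rw [← P.1.cons_tail_support]; rfl
  · rw [List.getLast?_map, List.getLast?_eq_some_getLast P.1.support_ne_nil, Walk.getLast_support]
    rfl
  · simp only [List.mem_map]
    rintro _ ⟨v, -, rfl⟩
    exact v.2

end Components

section Exchange

variable {W : Type*} [Finite W] {G : SimpleGraph W} {R H K : Set W} {x y : W}

theorem IsCompOff.ncard_lt_or_isCompOff_of_exchange (hH : IsCompOff G R H) (hH2 : 2 ≤ H.ncard)
    (hx : x ∈ H) (hyR : ∀ z, G.Adj y z → z ∈ R) (hK : IsCompOff G (insert x (R \ {y})) K) :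
    K.ncard < H.ncard ∨ (IsCompOff G R K ∧ K ≠ H) := by
  by_cases hyK : y ∈ K
  · have hKy : K ⊆ {y} := hK.subset_of_adj_closed hyK rfl fun a _ b hb ha hab => by
      rw [Set.mem_singleton_iff.mp ha] at hab
      exact absurd (Or.inr ⟨hyR b hab, hab.ne'⟩) (hK.notMem_of_mem hb)
    have := Set.ncard_le_ncard hKy
    rw [Set.ncard_singleton] at this
    exact .inl (by omega)
  have hKR : Disjoint K R := Set.disjoint_left.mpr fun v hv hvR =>
    hK.notMem_of_mem hv (Or.inr ⟨hvR, fun h => hyK (h ▸ hv)⟩)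
  obtain ⟨u, hu⟩ := hK.1
  obtain ⟨A, hA, huA⟩ := exists_isCompOff_mem (Set.disjoint_left.mp hKR hu)
  have hKA := hK.subset_of_mem hA hKR hu huA
  by_cases hAH : A = H
  · subst hAH
    have hxK : x ∉ K := fun h => hK.notMem_of_mem h (Set.mem_insert _ _)
    exact .inl (Set.ncard_lt_ncard ((Set.ssubset_iff_of_subset hKA).mpr ⟨x, hx, hxK⟩))
  · have hxA : x ∉ A := fun h => hAH (hA.eq_of_mem hH h hx)
    have hAR' : Disjoint A (insert x (R \ {y})) :=
      Set.disjoint_insert_right.mpr ⟨hxA, hA.2.1.mono_right Set.sdiff_subset⟩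
    rw [hKA.antisymm (hA.subset_of_mem hK hAR' huA hu)]
    exact .inr ⟨hA, hAH⟩

theorem IsCompOff.muC_le_and_omegaC_lt_of_exchange (hH : IsCompOff G R H)
    (hHmu : H.ncard = muC G R) (hH2 : 2 ≤ H.ncard) (hx : x ∈ H) (hyR : ∀ z, G.Adj y z → z ∈ R) :
    muC G (insert x (R \ {y})) ≤ muC G R ∧
      (muC G (insert x (R \ {y})) = muC G R →
        omegaC G (insert x (R \ {y})) < omegaC G R) := by
  have hμ : muC G (insert x (R \ {y})) ≤ muC G R := csSup_le' fun _ ⟨K, hK, hKk⟩ => hKk ▸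
    (hH.ncard_lt_or_isCompOff_of_exchange hH2 hx hyR hK).elim (fun h => by omega)
      fun h => h.1.ncard_le_muC
  refine ⟨hμ, fun heq => ?_⟩
  have hsub : {K | IsCompOff G (insert x (R \ {y})) K ∧ K.ncard = muC G (insert x (R \ {y}))} ⊆
      {A | IsCompOff G R A ∧ A.ncard = muC G R} \ {H} := by
    rintro K ⟨hK, hKμ⟩
    rcases hH.ncard_lt_or_isCompOff_of_exchange hH2 hx hyR hK with h | ⟨hK', hKH⟩
    · omega
    · exact ⟨⟨hK', hKμ.trans heq⟩, hKH⟩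
  calc omegaC G (insert x (R \ {y})) ≤ _ := Set.ncard_le_ncard hsub
    _ < omegaC G R := Set.ncard_sdiff_singleton_lt_of_mem ⟨hH, hHmu⟩

end Exchange

section Cycles

variable {W : Type*} {G : SimpleGraph W}

theorem exists_isCycleOn_of_list {L : List W} (h3 : 3 ≤ L.length) (hnd : L.Nodup)
    (hchain : L.IsChain G.Adj) (hclose : ∀ a ∈ L.getLast?, ∀ b ∈ L.head?, G.Adj a b) :
    ∃ d : ZMod L.length → W, IsCycleOn G L.length d ∧ Set.range d = {v | v ∈ L} := by
  have : NeZero L.length := ⟨by omega⟩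
  refine ⟨fun t => L[t.val]'t.val_lt, ⟨h3, fun s t h => ZMod.val_injective _ ?_, fun t => ?_⟩, ?_⟩
  · exact (hnd.getElem_inj_iff).mp h
  · have h1 : (t + 1).val = (t.val + 1) % L.length := by
      rw [ZMod.val_add, ZMod.val_one'' (by omega)]
    have ht := t.val_lt
    rcases Nat.lt_or_ge (t.val + 1) L.length with hlt | hge
    · simp only [h1, Nat.mod_eq_of_lt hlt]
      exact List.isChain_iff_getElem.mp hchain _ hlt
    · have hlast : t.val = L.length - 1 := by omega
      simp only [h1, show t.val + 1 = L.length by omega, Nat.mod_self]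
      apply hclose
      · simp [List.getLast?_eq_getElem?, hlast]
      · simp [List.head?_eq_getElem?]
  · ext v
    simp only [Set.mem_range, Set.mem_ofPred_eq, List.mem_iff_getElem]
    constructor
    · rintro ⟨t, rfl⟩
      exact ⟨_, _, rfl⟩
    · rintro ⟨k, hk, rfl⟩
      refine ⟨k, ?_⟩
      simp only [ZMod.val_natCast, Nat.mod_eq_of_lt hk]

def arc {n : ℕ} (c : ZMod n → W) (j : ZMod n) (m : ℕ) : List W :=
  (List.range m).map fun r : ℕ => c (j + (r : ZMod n))

section Arc

variable {n m : ℕ} {c : ZMod n → W} {j : ZMod n}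

@[simp]
theorem length_arc : (arc c j m).length = m := by simp [arc]

theorem mem_arc {v : W} : v ∈ arc c j m ↔ ∃ r < m, c (j + r) = v := by simp [arc]

theorem head?_arc : (arc c j (m + 1)).head? = some (c j) := by simp [arc, List.head?_range]

theorem getLast?_arc : (arc c j (m + 1)).getLast? = some (c (j + m)) := by
  simp [arc, List.getLast?_range]

theorem nodup_arc (hc : Function.Injective c) (hm : m ≤ n) : (arc c j m).Nodup := by
  refine (List.nodup_range).map_on fun r hr s hs h => ?_
  have hrs := congrArg ZMod.val (add_left_cancel (hc h))
  rwa [ZMod.val_natCast_of_lt (by simp at hr; omega),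
    ZMod.val_natCast_of_lt (by simp at hs; omega)] at hrs

theorem isChain_arc (hc : ∀ i, G.Adj (c i) (c (i + 1))) : (arc c j m).IsChain G.Adj := by
  cases m with
  | zero => simp [arc]
  | succ m =>
    refine List.isChain_map _ |>.mpr <| (List.isChain_range_succ _ _).mpr fun r _ => ?_
    simpa [add_assoc] using hc (j + r)

theorem mem_arc_add_two_iff [NeZero n] (hc : Function.Injective c) (i : ZMod n) {v : W} :
    v ∈ arc c (i + 2) (n - 1) ↔ v ∈ Set.range c ∧ v ≠ c (i + 1) := by
  have hn := NeZero.pos n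
  rw [mem_arc]
  constructor
  · rintro ⟨r, hr, rfl⟩
    refine ⟨⟨_, rfl⟩, fun h => ?_⟩
    have h0 : ((r + 1 : ℕ) : ZMod n) = 0 := by
      push_cast
      linear_combination hc h
    rw [ZMod.natCast_eq_zero_iff] at h0
    exact absurd (Nat.le_of_dvd (by omega) h0) (by omega)
  · rintro ⟨⟨t, rfl⟩, ht⟩
    have hr : (((t - (i + 2)).val : ℕ) : ZMod n) = t - (i + 2) := ZMod.natCast_zmod_val _
    refine ⟨(t - (i + 2)).val, ?_, by rw [hr]; ring_nf⟩
    refine lt_of_le_of_ne (Nat.le_sub_one_of_lt (ZMod.val_lt _)) fun h => ht ?_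
    rw [h, Nat.cast_sub hn, ZMod.natCast_self] at hr
    congr 1
    linear_combination -hr

end Arc

theorem IsCycleOn.exists_isCycleOn_arc_append {n : ℕ} {c : ZMod n → W} (hc : IsCycleOn G n c)
    (j : ZMod n) {m : ℕ} (hm : m < n) {l : List W} (hl : l.Nodup) (hchain : l.IsChain G.Adj)
    (hoff : ∀ v ∈ l, v ∉ Set.range c) {a b : W} (ha : l.head? = some a)
    (hb : l.getLast? = some b) (hja : G.Adj (c (j + m)) a) (hbj : G.Adj b (c j))
    (h3 : 3 ≤ m + 1 + l.length) :
    ∃ d : ZMod (m + 1 + l.length) → W, IsCycleOn G (m + 1 + l.length) d ∧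
      Set.range d = {v | v ∈ arc c j (m + 1) ++ l} := by
  have hlen : (arc c j (m + 1) ++ l).length = m + 1 + l.length := by simp
  rw [← hlen]
  refine exists_isCycleOn_of_list (by rwa [hlen]) ?_ ?_ ?_
  · refine List.nodup_append.mpr ⟨nodup_arc hc.2.1 hm, hl, fun v hv w hw hvw => ?_⟩
    obtain ⟨r, -, rfl⟩ := mem_arc.mp hv
    exact hoff w hw ⟨_, hvw⟩
  · refine List.isChain_append.mpr ⟨isChain_arc hc.2.2, hchain, ?_⟩
    simpa [getLast?_arc, ha] using hja
  · simpa [List.getLast?_append, List.head?_append, hb, head?_arc] using hbj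

theorem IsLongestCycle.add_length_le_of_arc_append {n : ℕ} {c : ZMod n → W}
    (hc : IsLongestCycle G n c) (j : ZMod n) {m : ℕ} (hm : m < n) {l : List W} (hl : l.Nodup)
    (hchain : l.IsChain G.Adj) (hoff : ∀ v ∈ l, v ∉ Set.range c) {a b : W}
    (ha : l.head? = some a) (hb : l.getLast? = some b) (hja : G.Adj (c (j + m)) a)
    (hbj : G.Adj b (c j)) : m + 1 + l.length ≤ n := by
  by_contra! hlt
  obtain ⟨d, hd, -⟩ :=
    hc.1.exists_isCycleOn_arc_append j hm hl hchain hoff ha hb hja hbj (by have := hc.1.1; omega)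
  exact absurd (hc.2 _ d hd) (by omega)

end Cycles

section P5

variable {W : Type*} {G : SimpleGraph W}

theorem P5Free.false_of_inducedPath (hG : P5Free G) {a b c d e : W} (hnd : [a, b, c, d, e].Nodup)
    (hab : G.Adj a b) (hbc : G.Adj b c) (hcd : G.Adj c d) (hde : G.Adj d e) (hac : ¬ G.Adj a c)
    (had : ¬ G.Adj a d) (hae : ¬ G.Adj a e) (hbd : ¬ G.Adj b d) (hbe : ¬ G.Adj b e)
    (hce : ¬ G.Adj c e) : False := by
  refine hG ⟨fun k => [a, b, c, d, e].getD k a, ⟨fun i j hi hj h => ?_, fun i hi => ?_⟩,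
    fun i j hi hj h => ?_⟩
  · simp only [List.getD_eq_getElem _ _ (show i < [a, b, c, d, e].length from hi),
      List.getD_eq_getElem _ _ (show j < [a, b, c, d, e].length from hj)] at h
    exact hnd.getElem_inj_iff.mp h
  · have : i < 4 := by omega
    interval_cases i <;> assumption
  · interval_cases i <;> interval_cases j <;> simp_all [G.adj_comm]

end P5

section LongestCycle

variable {W : Type*} {G : SimpleGraph W} {n : ℕ} {c : ZMod n → W} {H : Set W} {i : ZMod n}

theorem IsLongestCycle.eq_of_adj_of_adj_add_two (hc : IsLongestCycle G n c)
    (hH : IsCompOff G (Set.range c) H) {a b : W} (ha : a ∈ H) (hb : b ∈ H)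
    (hai : G.Adj a (c i)) (hbi : G.Adj b (c (i + 2))) : a = b := by
  have hn := hc.1.1
  obtain ⟨l, hl, hchain, hla, hlb, hlH⟩ := hH.exists_path_list ha hb
  have hback : i + 2 + ((n - 2 : ℕ) : ZMod n) = i := by
    rw [ZMod.natCast_sub_self (by omega)]; push_cast; ring
  have hlen := hc.add_length_le_of_arc_append (i + 2) (m := n - 2) (by omega) hl hchain
    (fun v hv => hH.notMem_of_mem (hlH v hv)) hla hlb (by rw [hback]; exact hai.symm) hbi
  have hab := List.head?_eq_getLast?_of_length_le_one (l := l) (by omega)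
  rw [hla, hlb] at hab
  exact Option.some_injective _ hab

theorem IsLongestCycle.not_adj_add_one_of_adj (hc : IsLongestCycle G n c)
    (hH : IsCompOff G (Set.range c) H) {a b : W} (ha : a ∈ H) (hb : b ∈ H)
    (hai : G.Adj a (c i)) : ¬ G.Adj b (c (i + 1)) := by
  intro hbi
  have hn := hc.1.1
  obtain ⟨l, hl, hchain, hla, hlb, hlH⟩ := hH.exists_path_list ha hb
  have hback : i + 1 + ((n - 1 : ℕ) : ZMod n) = i := by
    rw [ZMod.natCast_sub_self (by omega)]; push_cast; ring
  have hlen := hc.add_length_le_of_arc_append (i + 1) (m := n - 1) (by omega) hl hchain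
    (fun v hv => hH.notMem_of_mem (hlH v hv)) hla hlb (by rw [hback]; exact hai.symm) hbi
  have hl0 : l ≠ [] := by rintro rfl; simp at hla
  have := List.length_pos_of_ne_nil hl0
  omega

theorem IsLongestCycle.mem_range_of_adj_add_one [Finite W] (hG : P5Free G)
    (hc : IsLongestCycle G n c) (hH : IsCompOff G (Set.range c) H) (hH2 : 1 < H.ncard) {x : W}
    (hx : x ∈ H) (hxi : G.Adj x (c i)) (hxi2 : G.Adj x (c (i + 2))) {z : W}
    (hz : G.Adj (c (i + 1)) z) : z ∈ Set.range c := by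
  by_contra hzR
  obtain ⟨x', hx', hxx'⟩ := hH.exists_adj_of_one_lt_ncard hx hH2
  obtain ⟨Z, hZ, hzZ⟩ := exists_isCompOff_mem hzR
  have hzH : z ∉ H := fun hzH => hc.not_adj_add_one_of_adj hH hx hzH hxi hz.symm
  refine hG.false_of_inducedPath ?_ hxx'.symm hxi (hc.1.2.2 i) hz
    (fun h => hxx'.ne (hc.eq_of_adj_of_adj_add_two hH hx' hx h hxi2).symm)
    (hc.not_adj_add_one_of_adj hH hx hx' hxi) (hH.2.2.2 x' z hx' hzH hzR)
    (hc.not_adj_add_one_of_adj hH hx hx hxi) (hH.2.2.2 x z hx hzH hzR)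
    (fun h => hc.not_adj_add_one_of_adj hZ hzZ hzZ h.symm hz.symm)
  have hC : ∀ {v} t, v ∈ H → v ≠ c t := fun t hv =>
    (ne_of_mem_of_not_mem (Set.mem_range_self t) (hH.notMem_of_mem hv)).symm
  simp only [List.nodup_cons, List.mem_cons, List.not_mem_nil, or_false, List.nodup_nil,
    not_or, and_true, not_false_eq_true]
  exact ⟨⟨hxx'.ne', hC i hx', hC (i + 1) hx', ne_of_mem_of_not_mem hx' hzH⟩,
    ⟨hC i hx, hC (i + 1) hx, ne_of_mem_of_not_mem hx hzH⟩,
    ⟨(hc.1.2.2 i).ne, ne_of_mem_of_not_mem (Set.mem_range_self i) hzR⟩, hz.ne⟩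

theorem IsLongestCycle.exists_exchange (hc : IsLongestCycle G n c) {x : W}
    (hx : x ∉ Set.range c) (hxi : G.Adj x (c i)) (hxi2 : G.Adj x (c (i + 2))) :
    ∃ (m : ℕ) (d : ZMod m → W), IsLongestCycle G m d ∧
      Set.range d = insert x (Set.range c \ {c (i + 1)}) := by
  have hn := hc.1.1
  have : NeZero n := ⟨by omega⟩
  have hback : i + 2 + ((n - 2 : ℕ) : ZMod n) = i := by
    rw [ZMod.natCast_sub_self (by omega)]; push_cast; ring
  obtain ⟨d, hd, hrange⟩ := hc.1.exists_isCycleOn_arc_append (i + 2) (m := n - 2) (by omega)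
    (List.nodup_singleton x) (List.isChain_singleton x) (by simpa using hx) rfl rfl
    (by rw [hback]; exact hxi.symm) hxi2 (by simp only [List.length_singleton]; omega)
  refine ⟨_, d, ⟨hd, fun m d' hd' => (hc.2 m d' hd').trans ?_⟩, ?_⟩
  · simp only [List.length_singleton]
    omega
  ext v
  rw [hrange, show n - 2 + 1 = n - 1 by omega]
  simp only [Set.mem_ofPred_eq, List.mem_append, mem_arc_add_two_iff hc.1.2.1, List.mem_singleton,
    Set.mem_insert_iff, Set.mem_sdiff, Set.mem_singleton_iff]
  tauto

end LongestCycle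

theorem stmt_13_general (G : SimpleGraph V) (hG : P5Free G)
    (n : ℕ) (c : ZMod n → V) (hc : IsLongestCycle G n c)
    (hmin : ∀ (m : ℕ) (d : ZMod m → V), IsLongestCycle G m d →
      muC G (Set.range c) ≤ muC G (Set.range d) ∧
      (muC G (Set.range c) = muC G (Set.range d) →
        omegaC G (Set.range c) ≤ omegaC G (Set.range d)))
    (H : Set V) (hH : IsCompOff G (Set.range c) H)
    (hHmu : H.ncard = muC G (Set.range c)) (hH2 : 2 ≤ H.ncard) :
    ∀ i : ZMod n, (∃ x ∈ H, G.Adj x (c i)) → ¬ ∃ x ∈ H, G.Adj x (c (i + 2)) := by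
  rintro i ⟨x, hx, hxi⟩ ⟨y, hy, hyi⟩
  obtain rfl := hc.eq_of_adj_of_adj_add_two hH hx hy hxi hyi
  have hsucc : ∀ z, G.Adj (c (i + 1)) z → z ∈ Set.range c := fun z hz =>
    hc.mem_range_of_adj_add_one hG hH hH2 hx hxi hyi hz
  obtain ⟨m, d, hd, hrange⟩ := hc.exists_exchange (hH.notMem_of_mem hx) hxi hyi
  have hexch := hH.muC_le_and_omegaC_lt_of_exchange hHmu hH2 hx hsucc
  rw [← hrange] at hexch
  have := hmin m d hd
  omega

theorem stmt_13 (G : SimpleGraph V) (hG : P5Free G)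
    (hnd : ∀ (m : ℕ) (d : ZMod m → V), IsLongestCycle G m d → ¬ DominatingCycle G m d)
    (n : ℕ) (c : ZMod n → V) (hc : IsLongestCycle G n c)
    (hmin : ∀ (m : ℕ) (d : ZMod m → V), IsLongestCycle G m d →
      muC G (Set.range c) ≤ muC G (Set.range d) ∧
      (muC G (Set.range c) = muC G (Set.range d) →
        omegaC G (Set.range c) ≤ omegaC G (Set.range d)))
    (H : Set V) (hH : IsCompOff G (Set.range c) H)
    (hHmu : H.ncard = muC G (Set.range c)) (hH2 : 2 ≤ H.ncard) :
    ∀ i : ZMod n, (∃ x ∈ H, G.Adj x (c i)) → ¬ ∃ x ∈ H, G.Adj x (c (i + 2)) :=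
  stmt_13_general G hG n c hc hmin H hH hHmu hH2
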